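/- Let h be a harmonic 1-form (with Neumann boundary conditions) on a compact Riemannian 3-manifold N with boundary, Poincaré dual to a class ρ with a dual surface of area at most 2π·τ. If the pointwise mean-value inequality ‖h‖_∞ ≤ C‖h‖_2 holds, then ‖h‖_2 ≤ 2πC·τ and hence ‖h‖_∞ ≤ 2πC²·τ. Consequently the thick stable norm ‖ρ‖ = sup_γ ρ(γ)/len(γ) satisfies ‖ρ‖ ≤ 2πC²·τ. -/
import Mathlib

open Real

/-- Let `h` be a harmonic 1-form with Neumann boundary conditions on a compact
Riemannian 3-manifold, with `L²` norm `n₂` and sup norm `nSup`, Poincaré dual to a class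
`ρ` with a dual surface of area at most `2π τ` (so that by Poincaré duality
`n₂² ≤ nSup · 2π τ`).  If the mean-value inequality `nSup ≤ C n₂` holds, then
`n₂ ≤ 2π C τ` and hence `nSup ≤ 2π C² τ`; consequently the thick stable norm
`nρ = sup_γ ρ(γ)/len(γ)` (which satisfies `nρ ≤ nSup`) is at most `2π C² τ`. -/
theorem harmonic_norm_thurston_bound (n₂ nSup nρ τ C : ℝ)
    (hn₂ : 0 ≤ n₂) (hnSup : 0 ≤ nSup) (hτ : 0 ≤ τ) (hC : 0 ≤ C)
    (hdual : n₂ ^ 2 ≤ nSup * (2 * π * τ))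
    (hmv : nSup ≤ C * n₂)
    (hρ : nρ ≤ nSup) :
    n₂ ≤ 2 * π * C * τ ∧ nSup ≤ 2 * π * C ^ 2 * τ ∧ nρ ≤ 2 * π * C ^ 2 * τ := by
  have h1 : n₂ ≤ 2 * π * C * τ := by
    rcases eq_or_lt_of_le hn₂ with h | h
    · have : 0 ≤ 2 * π * C * τ := by positivity
      linarith
    · have h2 : n₂ ^ 2 ≤ C * n₂ * (2 * π * τ) := by
        refine hdual.trans (mul_le_mul_of_nonneg_right hmv (by positivity))
      nlinarith
  have h2 : nSup ≤ 2 * π * C ^ 2 * τ := by nlinarith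
  exact ⟨h1, h2, hρ.trans h2⟩
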